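/- arXiv:1908.00665 — 4 statements merged into one kernel-verified Lean document; each statement's English description precedes it below -/
import Mathlib

section
/- Every graph G on n vertices with more than (l-2)n/2 edges contains a path on l vertices as a subgraph, for every l ≥ 2. -/
open SimpleGraph

/-- `G` embeds into `H` as a (not necessarily induced) subgraph. -/
def SubgraphOf {V W : Type*} (G : SimpleGraph V) (H : SimpleGraph W) : Prop :=
  ∃ f : V ↪ W, ∀ a b, G.Adj a b → H.Adj (f a) (f b)

/-- `G` contains a linear forest consisting of pairwise vertex-disjoint paths
with orders `L i` (`i : ι`). -/
def ContainsForest {V ι : Type*} (G : SimpleGraph V) (L : ι → ℕ) : Prop :=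
  ∃ f : ∀ i, Fin (L i) → V,
    (∀ i, Function.Injective (f i)) ∧
    (∀ i j, i ≠ j → ∀ a b, f i a ≠ f j b) ∧
    (∀ i (a : ℕ) (ha : a + 1 < L i), G.Adj (f i ⟨a, by omega⟩) (f i ⟨a + 1, ha⟩))

/-- `G` is 2-connected: more than 2 vertices and removing fewer than 2 vertices
leaves a connected graph. -/
def TwoConnected {V : Type*} [Fintype V] (G : SimpleGraph V) : Prop :=
  2 < Fintype.card V ∧
    ∀ s : Finset V, s.card < 2 → (G.induce ((s : Set V)ᶜ)).Connected

/-- `S_{n,h} = K_h ∨ \overline{K_{n-h}}`. -/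
def Sgraph (n h : ℕ) : SimpleGraph (Fin n) :=
  SimpleGraph.fromRel (fun a _ => a.val < h)

/-- `S⁺_{n,h} = K_h ∨ (K_2 ∪ \overline{K_{n-h-2}})`, the extra edge joining vertices `h` and `h+1`. -/
def SplusGraph (n h : ℕ) : SimpleGraph (Fin n) :=
  SimpleGraph.fromRel (fun a b => a.val < h ∨ (a.val ≤ h + 1 ∧ b.val ≤ h + 1))

/-- index of the clique block containing vertex `v ≥ 1` in `K_1 ∨ (t₁ K_h ∪ t₂ K_{h+1})`. -/
def blockIdx (t₁ h v : ℕ) : ℕ :=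
  if v - 1 < t₁ * h then (v - 1) / h else t₁ + (v - 1 - t₁ * h) / (h + 1)

/-- `L_{t₁,t₂,h,h+1} = K_1 ∨ (t₁ K_h ∪ t₂ K_{h+1})`; vertex `0` is the center. -/
def Lgen (t₁ t₂ h : ℕ) : SimpleGraph (Fin (t₁ * h + t₂ * (h + 1) + 1)) :=
  SimpleGraph.fromRel (fun a b =>
    a.val = 0 ∨ blockIdx t₁ h a.val = blockIdx t₁ h b.val)

/-- `U_{3,h}`: three copies of `K_{h+1}` plus a triangle on one chosen vertex of each. -/
def Ugraph (h : ℕ) : SimpleGraph (Fin (3 * (h + 1))) :=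
  SimpleGraph.fromRel (fun a b =>
    a.val / (h + 1) = b.val / (h + 1) ∨ (a.val % (h + 1) = 0 ∧ b.val % (h + 1) = 0))

/-- `K_p ∨ (m K_2)`: a clique on the first `p` vertices joined to `m` disjoint edges. -/
def KjoinMK2 (p m : ℕ) : SimpleGraph (Fin (p + 2 * m)) :=
  SimpleGraph.fromRel (fun a b => a.val < p ∨ (a.val - p) / 2 = (b.val - p) / 2)

/-- `F_{t₁,t₂,h,h+1}`: `L_{t₁,t₂,h,h+1}` plus one extra `K_{h+1}` joined to the center by an edge. -/
def Fgraph (t₁ t₂ h : ℕ) : SimpleGraph (Fin (t₁ * h + (t₂ + 1) * (h + 1) + 1)) :=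
  SimpleGraph.fromRel (fun a b =>
    (a.val < t₁ * h + t₂ * (h + 1) + 1 ∧ b.val < t₁ * h + t₂ * (h + 1) + 1 ∧
      (a.val = 0 ∨ blockIdx t₁ h a.val = blockIdx t₁ h b.val)) ∨
    (t₁ * h + t₂ * (h + 1) + 1 ≤ a.val ∧ t₁ * h + t₂ * (h + 1) + 1 ≤ b.val) ∨
    (a.val = 0 ∧ b.val = t₁ * h + t₂ * (h + 1) + 1))

/-- `T_{t₁,t₂,h,h+1}`: `L_{t₁,t₂,h,h+1}` plus two extra `K_{h+1}`'s, each joined to the center by an edge. -/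
def Tgraph (t₁ t₂ h : ℕ) : SimpleGraph (Fin (t₁ * h + (t₂ + 2) * (h + 1) + 1)) :=
  SimpleGraph.fromRel (fun a b =>
    (a.val < t₁ * h + t₂ * (h + 1) + 1 ∧ b.val < t₁ * h + t₂ * (h + 1) + 1 ∧
      (a.val = 0 ∨ blockIdx t₁ h a.val = blockIdx t₁ h b.val)) ∨
    (t₁ * h + t₂ * (h + 1) + 1 ≤ a.val ∧ a.val < t₁ * h + (t₂ + 1) * (h + 1) + 1 ∧
      t₁ * h + t₂ * (h + 1) + 1 ≤ b.val ∧ b.val < t₁ * h + (t₂ + 1) * (h + 1) + 1) ∨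
    (t₁ * h + (t₂ + 1) * (h + 1) + 1 ≤ a.val ∧ t₁ * h + (t₂ + 1) * (h + 1) + 1 ≤ b.val) ∨
    (a.val = 0 ∧ b.val = t₁ * h + t₂ * (h + 1) + 1) ∨
    (a.val = 0 ∧ b.val = t₁ * h + (t₂ + 1) * (h + 1) + 1))

/-- attach a pendant path with `m` additional vertices at the vertex `u` of `H`
(i.e. identify `u` with an endpoint of `P_{m+1}`). -/
def attachPath {V : Type*} (H : SimpleGraph V) (u : V) (m : ℕ) : SimpleGraph (V ⊕ Fin m) :=
  SimpleGraph.fromRel (fun a b =>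
    (∃ x y, a = Sum.inl x ∧ b = Sum.inl y ∧ H.Adj x y) ∨
    (∃ j : Fin m, a = Sum.inl u ∧ b = Sum.inr j ∧ j.val = 0) ∨
    (∃ i j : Fin m, a = Sum.inr i ∧ b = Sum.inr j ∧ j.val = i.val + 1))

/-!
We prove the stronger bound `2 e(G) ≤ (l - 2) |s|` for every vertex set `s` containing all
non-isolated vertices, by induction on `s`. A vertex of degree at most `(l - 2) / 2` can be
isolated and dropped from `s`. Otherwise every non-isolated vertex has degree at least
`(l - 1) / 2`. The ends of a longest path `v₀ … v_t` (where `t + 1 < l`) have all their neighbours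
on the path and degrees summing to more than `t`, so by pigeonhole there are crossing chords
`v₀ v_{i+1}` and `v_t v_i`. These close the path into a cycle on the same vertices, and a neighbour
off that cycle would yield a longer path; so the `t + 1` path vertices span a union of components,
each vertex of degree at most `t ≤ l - 2`, and they can all be isolated and dropped together.
-/

open Finset

namespace SimpleGraph

variable {V : Type*} {G H : SimpleGraph V}

structure IsPathSeq (G : SimpleGraph V) (f : ℕ → V) (k : ℕ) : Prop where
  injOn : Set.InjOn f (Set.Iio k)
  adj : ∀ i, i + 1 < k → G.Adj (f i) (f (i + 1))

structure IsCycleSeq (G : SimpleGraph V) (c : ℕ → V) (k : ℕ) : Prop where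
  injOn : Set.InjOn c (Set.Iio k)
  adj : ∀ i < k, G.Adj (c i) (c ((i + 1) % k))

namespace IsPathSeq

variable {f : ℕ → V} {k : ℕ}

theorem of_le (hf : G.IsPathSeq f k) {k' : ℕ} (h : k' ≤ k) : G.IsPathSeq f k' :=
  ⟨hf.injOn.mono (Set.Iio_subset_Iio h), fun i hi => hf.adj i (by omega)⟩

theorem mono (hf : G.IsPathSeq f k) (hGH : G ≤ H) : H.IsPathSeq f k :=
  ⟨hf.injOn, fun i hi => hGH (hf.adj i hi)⟩

theorem reverse (hf : G.IsPathSeq f k) : G.IsPathSeq (fun i => f (k - 1 - i)) k where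
  injOn i hi j hj h := by
    simp only [Set.mem_Iio] at hi hj
    have := hf.injOn (show k - 1 - i < k by omega) (show k - 1 - j < k by omega) h
    omega
  adj i hi := by
    have h := hf.adj (k - 1 - (i + 1)) (by omega)
    rw [show k - 1 - (i + 1) + 1 = k - 1 - i by omega] at h
    exact h.symm

theorem cons (hf : G.IsPathSeq f k) {w : V} (hw : G.Adj w (f 0)) (hwf : ∀ j < k, f j ≠ w) :
    G.IsPathSeq (fun m => if m = 0 then w else f (m - 1)) (k + 1) where
  injOn i hi j hj h := by
    simp only [Set.mem_Iio] at hi hj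
    by_cases hi0 : i = 0 <;> by_cases hj0 : j = 0 <;>
      simp only [hi0, hj0, if_true, if_false] at h
    · omega
    · exact absurd h.symm (hwf (j - 1) (by omega))
    · exact absurd h (hwf (i - 1) (by omega))
    · have := hf.injOn (show i - 1 < k by omega) (show j - 1 < k by omega) h
      omega
  adj i hi := by
    rcases Nat.eq_zero_or_pos i with rfl | hi0
    · simpa using hw
    · rw [if_neg hi0.ne', if_neg (by omega), show i + 1 - 1 = i - 1 + 1 by omega]
      exact hf.adj (i - 1) (by omega)

theorem exists_eq_of_adj_zero (hf : G.IsPathSeq f k) (hmax : ∀ g, ¬ G.IsPathSeq g (k + 1))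
    {w : V} (hw : G.Adj (f 0) w) : ∃ j < k, f j = w := by
  by_contra! h
  exact hmax _ (hf.cons hw.symm h)

theorem mem_support (hf : G.IsPathSeq f k) (hk : 2 ≤ k) {j : ℕ} (hj : j < k) :
    f j ∈ G.support := by
  by_cases hjk : j + 1 < k
  · exact (hf.adj j hjk).mem_support_left
  · have h := hf.adj (j - 1) (by omega)
    rw [show j - 1 + 1 = j by omega] at h
    exact h.mem_support_right

theorem subgraphOf (hf : G.IsPathSeq f k) : SubgraphOf (pathGraph k) G := by
  refine ⟨⟨fun i => f i, fun i j h => Fin.ext (hf.injOn i.isLt j.isLt h)⟩,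
    fun a b hab => ?_⟩
  change G.Adj (f a) (f b)
  rcases pathGraph_adj.1 hab with h | h
  · simpa [← h] using hf.adj a (by omega)
  · simpa [← h] using (hf.adj b (by omega)).symm

end IsPathSeq

theorem IsCycleSeq.isPathSeq_rotate {c : ℕ → V} {k : ℕ} (hc : G.IsCycleSeq c k) (a : ℕ) :
    G.IsPathSeq (fun m => c ((a + m) % k)) k where
  injOn m hm m' hm' h := by
    simp only [Set.mem_Iio] at hm hm'
    have hmod := hc.injOn (Nat.mod_lt _ (by omega)) (Nat.mod_lt _ (by omega)) h
    have := Nat.ModEq.add_left_cancel' a hmod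
    rwa [Nat.ModEq, Nat.mod_eq_of_lt hm, Nat.mod_eq_of_lt hm'] at this
  adj m hm := by
    have h := hc.adj ((a + m) % k) (Nat.mod_lt _ (by omega))
    rwa [Nat.mod_add_mod] at h

theorem IsCycleSeq.exists_eq_of_adj {c : ℕ → V} {k : ℕ} (hc : G.IsCycleSeq c k)
    (hmax : ∀ g, ¬ G.IsPathSeq g (k + 1)) {a : ℕ} (ha : a < k) {w : V} (hw : G.Adj (c a) w) :
    ∃ j < k, c j = w := by
  obtain ⟨m, -, rfl⟩ := (hc.isPathSeq_rotate a).exists_eq_of_adj_zero hmax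
    (by simpa [Nat.mod_eq_of_lt ha] using hw)
  exact ⟨_, Nat.mod_lt _ (by omega), rfl⟩

namespace IsPathSeq

variable {f : ℕ → V} {t i : ℕ}

/-- The cycle `v₀ … v_i v_t v_{t-1} … v_{i+1}`. -/
theorem isCycleSeq_of_chords (hf : G.IsPathSeq f (t + 1)) (hi : i < t)
    (h0 : G.Adj (f 0) (f (i + 1))) (ht : G.Adj (f t) (f i)) :
    G.IsCycleSeq (fun j => f (if j ≤ i then j else t + i + 1 - j)) (t + 1) where
  injOn a ha b hb h := by
    simp only [Set.mem_Iio] at ha hb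
    have := hf.injOn (show (if a ≤ i then a else t + i + 1 - a) < t + 1 by split_ifs <;> omega)
      (show (if b ≤ i then b else t + i + 1 - b) < t + 1 by split_ifs <;> omega) h
    split_ifs at this <;> omega
  adj j hj := by
    by_cases hjt : j < t
    · rw [Nat.mod_eq_of_lt (by omega : j + 1 < t + 1)]
      rcases lt_trichotomy j i with hji | rfl | hij
      · rw [if_pos hji.le, if_pos hji.nat_succ_le]
        exact hf.adj j (by omega)
      · rw [if_pos le_rfl, if_neg (by omega), show t + j + 1 - (j + 1) = t by omega]
        exact ht.symm
      · rw [if_neg (by omega), if_neg (by omega),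
          show t + i + 1 - j = t + i + 1 - (j + 1) + 1 by omega]
        exact (hf.adj _ (by omega)).symm
    · rw [show j = t by omega, Nat.mod_self, if_neg (by omega), if_pos (Nat.zero_le _),
        show t + i + 1 - t = i + 1 by omega]
      exact h0.symm

theorem exists_eq_of_adj_of_chords (hf : G.IsPathSeq f (t + 1))
    (hmax : ∀ g, ¬ G.IsPathSeq g (t + 2)) (hi : i < t)
    (h0 : G.Adj (f 0) (f (i + 1))) (ht : G.Adj (f t) (f i))
    {j : ℕ} (hj : j < t + 1) {w : V} (hw : G.Adj (f j) w) : ∃ j' < t + 1, f j' = w := by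
  set σ : ℕ → ℕ := fun j => if j ≤ i then j else t + i + 1 - j
  have hσ : ∀ j < t + 1, σ j < t + 1 ∧ σ (σ j) = j := by
    intro j hj
    simp only [σ]
    split_ifs <;> omega
  obtain ⟨a, ha, rfl⟩ := (hf.isCycleSeq_of_chords hi h0 ht).exists_eq_of_adj hmax
    (hσ j hj).1 (show G.Adj (f (σ (σ j))) w by rwa [(hσ j hj).2])
  exact ⟨σ a, (hσ a ha).1, rfl⟩

theorem exists_chords [Fintype V] [DecidableEq V] [DecidableRel G.Adj]
    (hf : G.IsPathSeq f (t + 1)) (hmax : ∀ g, ¬ G.IsPathSeq g (t + 2))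
    (hdeg : t < G.degree (f 0) + G.degree (f t)) :
    ∃ i < t, G.Adj (f 0) (f (i + 1)) ∧ G.Adj (f t) (f i) := by
  set A := (range t).filter fun i => G.Adj (f 0) (f (i + 1))
  set B := (range t).filter fun i => G.Adj (f t) (f i)
  have hA : G.degree (f 0) ≤ #A := by
    rw [← card_neighborFinset_eq_degree]
    refine (card_le_card fun w hw => ?_).trans (card_image_le (f := fun i => f (i + 1)))
    rw [mem_neighborFinset] at hw
    obtain ⟨j, hj, rfl⟩ := hf.exists_eq_of_adj_zero hmax hw
    have hj0 : j ≠ 0 := by rintro rfl; exact hw.ne rfl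
    refine mem_image.2 ⟨j - 1, mem_filter.2 ⟨mem_range.2 (by omega), ?_⟩, ?_⟩ <;>
      simp only [Nat.sub_add_cancel (Nat.pos_of_ne_zero hj0), hw]
  have hB : G.degree (f t) ≤ #B := by
    rw [← card_neighborFinset_eq_degree]
    refine (card_le_card fun w hw => ?_).trans (card_image_le (f := f))
    rw [mem_neighborFinset] at hw
    obtain ⟨j, hj, rfl⟩ := hf.reverse.exists_eq_of_adj_zero hmax (by simpa using hw)
    have hj0 : j ≠ 0 := by rintro rfl; exact hw.ne (by simp)
    exact mem_image.2
      ⟨t - j, mem_filter.2 ⟨mem_range.2 (by omega), by simpa using hw⟩, by simp⟩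
  obtain ⟨i, hi⟩ := inter_nonempty_of_card_lt_card_add_card (filter_subset _ _ : A ⊆ range t)
    (filter_subset _ _ : B ⊆ range t)
    (by rw [card_range]; exact hdeg.trans_le (add_le_add hA hB))
  simp only [mem_inter, mem_filter, mem_range] at hi
  exact ⟨i, hi.1.1, hi.1.2, hi.2.2⟩

end IsPathSeq

theorem exists_isPathSeq_maximal {l : ℕ} (h2 : ∃ f, G.IsPathSeq f 2)
    (hl : ∀ f, ¬ G.IsPathSeq f l) :
    ∃ k, 2 ≤ k ∧ k < l ∧ (∃ f, G.IsPathSeq f k) ∧ ∀ g, ¬ G.IsPathSeq g (k + 1) := by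
  classical
  obtain ⟨f, hf⟩ := h2
  have hl2 : 2 ≤ l := by
    by_contra! h
    exact hl f (hf.of_le h.le)
  set P : ℕ → Prop := fun k => ∃ f, G.IsPathSeq f k
  set k := Nat.findGreatest P l
  have hk : P k := Nat.findGreatest_spec (P := P) hl2 ⟨f, hf⟩
  have hkl : k < l := (Nat.findGreatest_le l).lt_of_ne fun h => by
    obtain ⟨g, hg⟩ := hk
    exact hl g (h ▸ hg)
  refine ⟨k, Nat.le_findGreatest hl2 ⟨f, hf⟩, hkl, hk, fun g hg => ?_⟩
  exact Nat.findGreatest_is_greatest (Nat.lt_succ_self k) hkl ⟨g, hg⟩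

def isolate (G : SimpleGraph V) (s : Finset V) : SimpleGraph V where
  Adj a b := G.Adj a b ∧ a ∉ s ∧ b ∉ s
  symm := ⟨fun _ _ h => ⟨h.1.symm, h.2.2, h.2.1⟩⟩
  loopless := ⟨fun _ h => G.loopless.irrefl _ h.1⟩

@[simp]
theorem isolate_adj {s : Finset V} {a b : V} :
    (G.isolate s).Adj a b ↔ G.Adj a b ∧ a ∉ s ∧ b ∉ s :=
  Iff.rfl

theorem isolate_le (s : Finset V) : G.isolate s ≤ G := fun _ _ h => (isolate_adj.1 h).1

theorem support_isolate_subset (s : Finset V) : (G.isolate s).support ⊆ G.support \ s :=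
  fun _ ⟨w, h⟩ => ⟨⟨w, (isolate_adj.1 h).1⟩, (isolate_adj.1 h).2.1⟩

variable [Fintype V] [DecidableEq V] [DecidableRel G.Adj]

instance (s : Finset V) : DecidableRel (G.isolate s).Adj :=
  fun _ _ => decidable_of_iff' _ isolate_adj

theorem two_mul_card_edgeFinset_isolate_singleton (v : V) :
    2 * #G.edgeFinset = 2 * #(G.isolate {v}).edgeFinset + 2 * G.degree v := by
  have h : G.isolate {v} = G.deleteIncidenceSet v := by
    ext a b
    simp [deleteIncidenceSet_adj]
  have hcard : #(G.isolate {v}).edgeFinset = #G.edgeFinset - G.degree v := by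
    convert G.card_edgeFinset_deleteIncidenceSet v
  have hle : G.degree v ≤ #G.edgeFinset := by
    rw [← card_incidenceFinset_eq_degree]
    exact card_le_card (G.incidenceFinset_subset v)
  omega

theorem sum_degree_isolate_add_sum_degree {S : Finset V}
    (hS : ∀ v ∈ S, ∀ w, G.Adj v w → w ∈ S) :
    ∑ v, (G.isolate S).degree v + ∑ v ∈ S, G.degree v = ∑ v, G.degree v := by
  have hin : ∀ v ∈ S, (G.isolate S).degree v = 0 := fun v hv => by
    rw [degree_eq_zero_iff_notMem_support]
    exact fun h => (support_isolate_subset S h).2 hv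
  have hout : ∀ v ∉ S, (G.isolate S).degree v = G.degree v := fun v hv => by
    simp only [← card_neighborFinset_eq_degree]
    congr 1
    ext w
    simp only [mem_neighborFinset, isolate_adj]
    exact ⟨fun h => h.1, fun h => ⟨h, hv, fun hw => hv (hS w hw v h.symm)⟩⟩
  rw [← sum_add_sum_compl S fun v => (G.isolate S).degree v, ← sum_add_sum_compl S,
    sum_eq_zero hin, sum_congr rfl fun v hv => hout v (mem_compl.1 hv)]
  ring

theorem two_mul_card_edgeFinset_le_isolate_of_closed {S : Finset V} {l : ℕ}
    (hS : ∀ v ∈ S, ∀ w, G.Adj v w → w ∈ S) (hSl : #S < l) :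
    2 * #G.edgeFinset ≤ 2 * #(G.isolate S).edgeFinset + (l - 2) * #S := by
  have hdeg : ∀ v ∈ S, G.degree v ≤ l - 2 := fun v hv => by
    rw [← card_neighborFinset_eq_degree]
    have : G.neighborFinset v ⊆ S.erase v := fun w hw => by
      rw [mem_neighborFinset] at hw
      exact mem_erase.2 ⟨hw.ne', hS v hv w hw⟩
    have := card_le_card this
    rw [card_erase_of_mem hv] at this
    omega
  have := sum_le_sum hdeg
  rw [sum_const, smul_eq_mul] at this
  rw [← sum_degrees_eq_twice_card_edges, ← sum_degrees_eq_twice_card_edges,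
    ← sum_degree_isolate_add_sum_degree hS]
  nlinarith

theorem exists_closed_of_forall_degree {l : ℕ} (hl : ∀ f, ¬ G.IsPathSeq f l)
    (hdeg : ∀ v ∈ G.support, l ≤ 2 * G.degree v + 1) {a b : V} (hab : G.Adj a b) :
    ∃ S : Finset V, S.Nonempty ∧ ↑S ⊆ G.support ∧ (∀ v ∈ S, ∀ w, G.Adj v w → w ∈ S) ∧
      #S < l := by
  have hb : G.IsPathSeq (fun _ => b) 1 :=
    ⟨fun x hx y hy _ => by simp_all, fun i hi => by omega⟩
  obtain ⟨k, hk2, hkl, ⟨f, hf⟩, hmax⟩ :=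
    exists_isPathSeq_maximal ⟨_, hb.cons hab fun _ _ => hab.ne'⟩ hl
  obtain ⟨t, rfl⟩ : ∃ t, k = t + 1 := ⟨k - 1, by omega⟩
  obtain ⟨i, hi, h0, ht⟩ := hf.exists_chords hmax <| by
    have := hdeg _ (hf.mem_support hk2 (Nat.zero_lt_succ t))
    have := hdeg _ (hf.mem_support hk2 (Nat.lt_succ_self t))
    omega
  have hinj : Set.InjOn f ↑(range (t + 1)) := fun x hx y hy h =>
    hf.injOn (mem_range.1 hx) (mem_range.1 hy) h
  refine ⟨(range (t + 1)).image f, ⟨f 0, mem_image_of_mem f (by simp)⟩, ?_, ?_, ?_⟩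
  · simp only [coe_image, coe_range, Set.image_subset_iff]
    exact fun j hj => hf.mem_support hk2 hj
  · simp only [mem_image, mem_range]
    rintro _ ⟨j, hj, rfl⟩ w hw
    exact hf.exists_eq_of_adj_of_chords hmax hi h0 ht hj hw
  · rwa [card_image_of_injOn hinj, card_range]

theorem two_mul_card_edgeFinset_le_of_forall_not_isPathSeq {l : ℕ} (s : Finset V)
    (hs : G.support ⊆ s) (hl : ∀ f, ¬ G.IsPathSeq f l) :
    2 * #G.edgeFinset ≤ (l - 2) * #s := by
  induction s using Finset.strongInduction generalizing G with | H s ih => ?_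
  rcases G.edgeFinset.eq_empty_or_nonempty with hE | ⟨e, he⟩
  · simp [hE]
  suffices ∃ S ⊆ s, S.Nonempty ∧
      2 * #G.edgeFinset ≤ 2 * #(G.isolate S).edgeFinset + (l - 2) * #S by
    obtain ⟨S, hSs, hSne, hle⟩ := this
    have hrest := ih (s \ S) (sdiff_ssubset hSs hSne) (G := G.isolate S)
      ((support_isolate_subset S).trans (by simpa using Set.sdiff_subset_sdiff_left hs))
      fun f hf => hl f (hf.mono (isolate_le S))
    rw [← card_sdiff_add_card_eq_card hSs]
    nlinarith
  by_cases hlow : ∃ v ∈ s, 2 * G.degree v + 2 ≤ l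
  · obtain ⟨v, hv, hvl⟩ := hlow
    refine ⟨{v}, singleton_subset_iff.2 hv, singleton_nonempty v, ?_⟩
    rw [two_mul_card_edgeFinset_isolate_singleton v, card_singleton]
    omega
  · push Not at hlow
    induction e using Sym2.ind with | h a b => ?_
    obtain ⟨S, hSne, hSsupp, hScl, hSl⟩ := exists_closed_of_forall_degree hl
      (fun v hv => by have := hlow v (hs hv); omega) (mem_edgeFinset.1 he)
    exact ⟨S, coe_subset.1 (hSsupp.trans hs), hSne,
      two_mul_card_edgeFinset_le_isolate_of_closed hScl hSl⟩

end SimpleGraph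

theorem stmt_0_general {V : Type*} [Fintype V] [DecidableEq V] (G : SimpleGraph V)
    [DecidableRel G.Adj] (l : ℕ)
    (he : (l - 2) * Fintype.card V < 2 * G.edgeFinset.card) :
    SubgraphOf (SimpleGraph.pathGraph l) G := by
  by_contra hP
  have := G.two_mul_card_edgeFinset_le_of_forall_not_isPathSeq univ (by simp)
    fun f hf => hP hf.subgraphOf
  rw [card_univ] at this
  omega

/-- Erdős–Gallai: more than `(l-2)n/2` edges forces a path on `l` vertices. -/
theorem stmt_0 {V : Type*} [Fintype V] [DecidableEq V] (G : SimpleGraph V)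
    [DecidableRel G.Adj] (l : ℕ) (hl : 2 ≤ l)
    (he : (l - 2) * Fintype.card V < 2 * G.edgeFinset.card) :
    SubgraphOf (SimpleGraph.pathGraph l) G :=
  stmt_0_general G l he
end

section
/- Let G be a connected graph with minimum degree δ(G) ≥ h ≥ 2 and a longest cycle C of length at most 2h+1. Let U = V(G)\V(C). If the induced graph G[U] contains no path on 3 vertices, then for every edge u₁u₂ of G[U] we have N(u₁) ∩ V(C) = N(u₂) ∩ V(C). -/
/-!
Let `n ≤ 2h + 1` be the length of the longest cycle `C`, and let `A`, `B ⊆ ℤ/n` be the positions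
on `C` of the neighbours of `u₁` and `u₂`. As `G[U]` contains no `P₃`, the only neighbour of `uᵢ`
off `C` is the other `uⱼ`, so `|A|, |B| ≥ h - 1`. Maximality of `C` forbids consecutive positions
in `A ∪ B` (put `u₁`, `u₂` or the edge `u₁u₂` between them) and a position of `A` two steps away
from one of `B` (replace the vertex in between by `u₁u₂`). If some `x ∈ A \ B`, then
`|A ∪ B| ≥ |B| + 1 ≥ h`, and the constraints leave at least two positions of `ℤ/n` outside
`(A ∪ B) ∪ (A ∪ B + 1)`: next to a common position of `A` and `B` if there is one, and otherwise
where the runs of `A` and of `B` with step `2` end. Hence `2h + 2 ≤ n`, a contradiction.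
-/

open SimpleGraph

open Finset

namespace ZMod
variable {n : ℕ} [NeZero n]

lemma two_mul_card_add_card_le {S T : Finset (ZMod n)} (hS : ∀ z ∈ S, z + 1 ∉ S)
    (hT : ∀ t ∈ T, t ∉ S ∧ t - 1 ∉ S) : 2 * #S + #T ≤ n := by
  have hshift : #(S.image (· + 1)) = #S := card_image_of_injective _ (add_left_injective 1)
  have hdisj₁ : Disjoint S (S.image (· + 1)) := by
    simp only [Finset.disjoint_left, mem_image, not_exists, not_and]
    rintro z hz y hy rfl
    exact hS y hy hz
  have hdisj₂ : Disjoint (S ∪ S.image (· + 1)) T := by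
    simp only [Finset.disjoint_right, mem_union, mem_image, not_or, not_exists, not_and]
    refine fun t ht ↦ ⟨(hT t ht).1, ?_⟩
    rintro y hy rfl
    exact (hT _ ht).2 (by simpa using hy)
  calc 2 * #S + #T = #(S ∪ S.image (· + 1) ∪ T) := by
        rw [card_union_of_disjoint hdisj₂, card_union_of_disjoint hdisj₁, hshift]; ring
    _ ≤ Fintype.card (ZMod n) := card_le_univ _
    _ = n := ZMod.card n

lemma two_mul_card_add_two_le {S : Finset (ZMod n)} (hS : ∀ z ∈ S, z + 1 ∉ S) {p q : ZMod n}
    (hpq : p ≠ q) (hp : p ∉ S ∧ p - 1 ∉ S) (hq : q ∉ S ∧ q - 1 ∉ S) : 2 * #S + 2 ≤ n := by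
  simpa [card_pair hpq] using two_mul_card_add_card_le hS (T := {p, q}) (by simp [hp, hq])

lemma exists_mem_add_two_notMem {Y : Finset (ZMod n)} (hY : Y.Nonempty) {z : ZMod n}
    (hz : z ∉ Y) (hz' : z - 1 ∉ Y) : ∃ y ∈ Y, y + 2 ∉ Y := by
  by_contra! hclosed
  obtain ⟨y, hy⟩ := hY
  have hcover : ∀ k : ℕ, y + k ∈ Y ∨ y + k - 1 ∈ Y := by
    intro k
    induction k with
    | zero => simpa using Or.inl hy
    | succ k ih =>
      push_cast
      rcases ih with ih | ih
      · exact Or.inr (by simpa [← add_assoc] using ih)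
      · exact Or.inl (by convert hclosed _ ih using 1; ring)
  simpa [ZMod.natCast_zmod_val, hz, hz'] using hcover (z - y).val

section
variable {A B : Finset (ZMod n)} (hsep : ∀ z ∈ A ∪ B, z + 1 ∉ A ∪ B)
  (hAB : ∀ z ∈ A, z + 2 ∉ B) (hBA : ∀ z ∈ B, z + 2 ∉ A)
include hsep hAB hBA

lemma two_mul_card_union_add_two_le_of_mem_inter {x z : ZMod n} (hxA : x ∈ A) (hxB : x ∉ B)
    (hzA : z ∈ A) (hzB : z ∈ B) : 2 * #(A ∪ B) + 2 ≤ n := by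
  have hzS : z ∈ A ∪ B := mem_union_left _ hzA
  have hne : z + 2 ≠ z - 1 := by
    intro h
    have hn : n ≤ 3 := Nat.le_of_dvd three_pos
      ((ZMod.natCast_eq_zero_iff 3 n).mp (by linear_combination h))
    have hS : 1 < #(A ∪ B) :=
      one_lt_card.mpr ⟨x, mem_union_left _ hxA, z, hzS, fun hxz ↦ hxB (hxz ▸ hzB)⟩
    have := two_mul_card_add_card_le hsep (T := ∅) (by simp)
    rw [card_empty] at this
    omega
  refine two_mul_card_add_two_le hsep hne ⟨?_, ?_⟩ ⟨fun h ↦ hsep _ h (by simpa using hzS), ?_⟩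
  · simp only [mem_union, not_or]
    exact ⟨hBA z hzB, hAB z hzA⟩
  · rw [show z + 2 - 1 = z + 1 by ring]
    exact hsep z hzS
  · rw [show z - 1 - 1 = z - 2 by ring]
    simp only [mem_union, not_or]
    exact ⟨fun h ↦ hAB _ h (by simpa using hzB), fun h ↦ hBA _ h (by simpa using hzA)⟩

lemma two_mul_card_union_add_two_le_of_disjoint (hdisj : Disjoint A B) {x : ZMod n}
    (hxA : x ∈ A) (hB : B.Nonempty) : 2 * #(A ∪ B) + 2 ≤ n := by
  have hpred : ∀ z ∈ A ∪ B, z - 1 ∉ A ∪ B := fun z hz h ↦ hsep _ h (by simpa using hz)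
  have hsucc : ∀ z ∈ A ∪ B, z + 2 - 1 ∉ A ∪ B := fun z hz ↦ by
    rw [show z + 2 - 1 = z + 1 by ring]
    exact hsep z hz
  obtain ⟨b, hbB, hb⟩ := exists_mem_add_two_notMem hB (Finset.disjoint_left.mp hdisj hxA)
    fun h ↦ hpred x (mem_union_left _ hxA) (mem_union_right _ h)
  obtain ⟨a, haA, ha⟩ := exists_mem_add_two_notMem ⟨x, hxA⟩ (Finset.disjoint_right.mp hdisj hbB)
    fun h ↦ hpred b (mem_union_right _ hbB) (mem_union_left _ h)
  refine two_mul_card_add_two_le hsep (p := a + 2) (q := b + 2)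
    (fun h ↦ Finset.disjoint_left.mp hdisj haA (add_right_cancel h ▸ hbB))
    ⟨?_, hsucc a (mem_union_left _ haA)⟩ ⟨?_, hsucc b (mem_union_right _ hbB)⟩
  · simp only [mem_union, not_or]
    exact ⟨ha, hAB a haA⟩
  · simp only [mem_union, not_or]
    exact ⟨hBA b hbB, hb⟩

lemma two_mul_card_union_add_two_le {x : ZMod n} (hxA : x ∈ A) (hxB : x ∉ B)
    (hB : B.Nonempty) : 2 * #(A ∪ B) + 2 ≤ n := by
  by_cases hcommon : ∃ z ∈ A, z ∈ B
  · obtain ⟨z, hzA, hzB⟩ := hcommon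
    exact two_mul_card_union_add_two_le_of_mem_inter hsep hAB hBA hxA hxB hzA hzB
  · refine two_mul_card_union_add_two_le_of_disjoint hsep hAB hBA ?_ hxA hB
    exact Finset.disjoint_left.mpr fun z hzA hzB ↦ hcommon ⟨z, hzA, hzB⟩

end

end ZMod

namespace SimpleGraph

lemma subgraphOf_pathGraph_three {W : Type*} {H : SimpleGraph W} {a b c : W} (hab : H.Adj a b)
    (hbc : H.Adj b c) (hac : a ≠ c) : SubgraphOf (pathGraph 3) H := by
  refine ⟨⟨![a, b, c], ?_⟩, ?_⟩
  · intro i j hij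
    fin_cases i <;> fin_cases j <;> simp_all [hab.ne, hbc.ne, hab.ne.symm, hbc.ne.symm, hac.symm]
  · intro i j hij
    change H.Adj (![a, b, c] i) (![a, b, c] j)
    rw [pathGraph_adj] at hij
    fin_cases i <;> fin_cases j <;> simp_all [hab.symm, hbc.symm]

variable {V : Type*} {G : SimpleGraph V}

lemma eq_of_adj_of_adj_of_not_subgraphOf_pathGraph_three {s : Set V}
    (hP3 : ¬ SubgraphOf (pathGraph 3) (G.induce s)) {a b c : V} (ha : a ∈ s) (hb : b ∈ s)
    (hc : c ∈ s) (hab : G.Adj a b) (hac : G.Adj a c) : b = c := by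
  by_contra hbc
  exact hP3 (subgraphOf_pathGraph_three (a := ⟨b, hb⟩) (b := ⟨a, ha⟩) (c := ⟨c, hc⟩) hab.symm hac
    (by simpa using hbc))

namespace Walk
variable {v : V}

lemma IsCycle.idxOf_getVert [DecidableEq V] {c : G.Walk v v} (hc : c.IsCycle) {i : ℕ}
    (hi : i < c.length) : c.support.idxOf (c.getVert i) = i := by
  have hidx := c.getVert_support_idxOf (c.getVert_mem_support i)
  have hlt := List.idxOf_lt_length_of_mem (c.getVert_mem_support i)
  rw [length_support] at hlt
  have hne : c.support.idxOf (c.getVert i) ≠ c.length := by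
    intro hn
    rw [hn, getVert_length, eq_comm, hc.getVert_endpoint_iff hi.le] at hidx
    rcases hidx with rfl | rfl
    · rw [getVert_zero, ← cons_tail_support, List.idxOf_cons_self] at hn
      have := hc.three_le_length; omega
    · omega
  exact hc.getVert_injOn' (show _ ≤ c.length - 1 by omega) (show i ≤ c.length - 1 by omega) hidx

lemma IsCycle.getVert_rotate [DecidableEq V] {c : G.Walk v v} (hc : c.IsCycle) {i : ℕ}
    (hi : i < c.length) (j : ℕ) (hj : j ≤ c.length) :
    (c.rotate (c.getVert i) (c.getVert_mem_support i)).getVert j =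
      c.getVert ((i + j) % c.length) := by
  rw [rotate, dropUntil_eq_drop, takeUntil_eq_take, getVert_append]
  simp only [getVert_copy, length_copy, drop_length, drop_getVert, take_getVert,
    hc.idxOf_getVert hi]
  split_ifs with h
  · rw [Nat.mod_eq_of_lt (by omega)]
  · rw [show i + j = (j - (c.length - i)) + c.length by omega, Nat.add_mod_right,
      Nat.mod_eq_of_lt (by omega)]
    congr 1; omega

/-- Positions on a closed walk are read in `ZMod c.length`, so that position `c.length - 1` is
followed by position `0`. -/
def cycleVert (c : G.Walk v v) (z : ZMod c.length) : V := c.getVert z.val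

lemma cycleVert_mem_support (c : G.Walk v v) (z : ZMod c.length) : c.cycleVert z ∈ c.support :=
  c.getVert_mem_support _

lemma exists_cycleVert_eq {c : G.Walk v v} [NeZero c.length] {x : V} (hx : x ∈ c.support) :
    ∃ z, c.cycleVert z = x := by
  obtain ⟨k, rfl, hk⟩ := mem_support_iff_exists_getVert.mp hx
  refine ⟨k, ?_⟩
  rw [cycleVert, ZMod.val_natCast]
  rcases hk.lt_or_eq with hk | rfl
  · rw [Nat.mod_eq_of_lt hk]
  · rw [Nat.mod_self, getVert_zero, getVert_length]

lemma IsCycle.exists_isPath_cycleVert_add {c : G.Walk v v} (hc : c.IsCycle) (z : ZMod c.length)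
    {k : ℕ} (hk : 0 < k) (hkn : k < c.length) :
    ∃ p : G.Walk (c.cycleVert (z + k)) (c.cycleVert z),
      p.IsPath ∧ p.length = c.length - k ∧ ∀ x ∈ p.support, x ∈ c.support := by
  classical
  have : NeZero c.length := ⟨by omega⟩
  let d := c.rotate (c.cycleVert (z + k)) (c.cycleVert_mem_support _)
  have hend : d.getVert (c.length - k) = c.cycleVert z := by
    refine (hc.getVert_rotate (ZMod.val_lt (z + (k : ZMod c.length))) _ (by omega)).trans ?_
    rw [cycleVert, ← ZMod.val_natCast]
    congr 1
    rw [Nat.cast_add, ZMod.natCast_val, ZMod.cast_id', id, Nat.cast_sub hkn.le,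
      ZMod.natCast_self, zero_sub, add_neg_cancel_right]
  refine ⟨(d.take (c.length - k)).copy rfl hend, ?_, ?_, ?_⟩
  · rw [isPath_copy]
    exact (hc.rotate _).isPath_take (by rw [length_rotate]; omega)
  · rw [length_copy, take_length, length_rotate]; omega
  · intro x hx
    rw [support_copy] at hx
    exact (c.mem_support_rotate_iff _ _).mp ((d.isSubwalk_take _).support_subset hx)

lemma IsPath.isCycle_cons_cons {a y u : V} {q : G.Walk y a} (hq : q.IsPath) (hu : u ∉ q.support)
    (hau : G.Adj a u) (huy : G.Adj u y) (hya : y ≠ a) : (cons hau (cons huy q)).IsCycle := by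
  rw [cons_isCycle_iff]
  refine ⟨hq.cons hu, ?_⟩
  simp only [edges_cons, List.mem_cons, Sym2.eq_iff, not_or]
  exact ⟨⟨fun h ↦ hau.ne h.1, fun h ↦ hya h.1.symm⟩, fun h ↦ hu (q.snd_mem_support_of_mem_edges h)⟩

lemma IsPath.isCycle_cons_cons_cons {a y u₁ u₂ : V} {q : G.Walk y a} (hq : q.IsPath)
    (hu₁ : u₁ ∉ q.support) (hu₂ : u₂ ∉ q.support) (h₁ : G.Adj a u₁) (h₁₂ : G.Adj u₁ u₂)
    (h₂ : G.Adj u₂ y) : (cons h₁ (cons h₁₂ (cons h₂ q))).IsCycle := by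
  have hay : a ∈ q.support := q.end_mem_support
  rw [cons_isCycle_iff]
  refine ⟨(hq.cons hu₂).cons (by simp [h₁₂.ne, hu₁]), ?_⟩
  simp only [edges_cons, List.mem_cons, Sym2.eq_iff, not_or]
  exact ⟨⟨fun h ↦ h₁.ne h.1, fun h ↦ hu₂ (h.1 ▸ hay)⟩,
    ⟨fun h ↦ hu₂ (h.1 ▸ hay), fun h ↦ h₁₂.ne h.2⟩,
    fun h ↦ hu₁ (q.snd_mem_support_of_mem_edges h)⟩

def IsLongestCycle (c : G.Walk v v) : Prop :=
  c.IsCycle ∧ ∀ (w : V) (d : G.Walk w w), d.IsCycle → d.length ≤ c.length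

namespace IsLongestCycle
variable {c : G.Walk v v} (hc : c.IsLongestCycle)
include hc

lemma not_adj_cycleVert_add_one {w : V} (hw : w ∉ c.support) {z : ZMod c.length}
    (hz : G.Adj w (c.cycleVert z)) : ¬ G.Adj w (c.cycleVert (z + 1)) := by
  intro hz₁
  have h3 := hc.1.three_le_length
  obtain ⟨p, hp, hlen, hsupp⟩ := hc.1.exists_isPath_cycleVert_add z one_pos (by omega)
  have hne : c.cycleVert (z + (1 : ℕ)) ≠ c.cycleVert z := by
    rw [Ne, ← hp.nil_iff_eq, ← length_eq_zero_iff]; omega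
  have := hc.2 _ _ (hp.isCycle_cons_cons (fun h ↦ hw (hsupp w h)) hz.symm
    (by simpa using hz₁) hne)
  simp only [length_cons] at this
  omega

lemma not_adj_cycleVert_add {w₁ w₂ : V} (hw₁ : w₁ ∉ c.support) (hw₂ : w₂ ∉ c.support)
    (hw : G.Adj w₁ w₂) {k : ℕ} (hk : 0 < k) (hk₂ : k ≤ 2) {z : ZMod c.length}
    (hz : G.Adj w₁ (c.cycleVert z)) : ¬ G.Adj w₂ (c.cycleVert (z + k)) := by
  intro hzk
  have h3 := hc.1.three_le_length
  obtain ⟨p, hp, hlen, hsupp⟩ := hc.1.exists_isPath_cycleVert_add z hk (by omega)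
  have := hc.2 _ _ (hp.isCycle_cons_cons_cons (fun h ↦ hw₁ (hsupp _ h))
    (fun h ↦ hw₂ (hsupp _ h)) hz.symm hw hzk)
  simp only [length_cons] at this
  omega

end IsLongestCycle

section adjPositions
variable [DecidableRel G.Adj] (c : G.Walk v v) [NeZero c.length]

def adjPositions (w : V) : Finset (ZMod c.length) := {z | G.Adj w (c.cycleVert z)}

@[simp]
lemma mem_adjPositions {w : V} {z : ZMod c.length} :
    z ∈ c.adjPositions w ↔ G.Adj w (c.cycleVert z) := by
  simp [adjPositions]

lemma degree_le_card_adjPositions_add_one [Fintype V] {w w' : V}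
    (hw : ∀ y, G.Adj w y → y ∉ c.support → y = w') :
    G.degree w ≤ #(c.adjPositions w) + 1 := by
  classical
  have hsub : G.neighborFinset w ⊆ (c.adjPositions w).image c.cycleVert ∪ {w'} := by
    intro y hy
    rw [mem_neighborFinset] at hy
    by_cases hyc : y ∈ c.support
    · obtain ⟨z, rfl⟩ := exists_cycleVert_eq hyc
      exact mem_union_left _ (mem_image_of_mem _ (by simpa using hy))
    · exact mem_union_right _ (by simpa using hw y hy hyc)
  calc G.degree w = #(G.neighborFinset w) := (card_neighborFinset_eq_degree G w).symm
    _ ≤ #((c.adjPositions w).image c.cycleVert ∪ {w'}) := card_le_card hsub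
    _ ≤ #((c.adjPositions w).image c.cycleVert) + 1 := card_union_le _ _
    _ ≤ #(c.adjPositions w) + 1 := by gcongr; exact card_image_le

variable {c}

lemma IsLongestCycle.add_one_notMem_adjPositions_union (hc : c.IsLongestCycle) {w₁ w₂ : V}
    (hw₁ : w₁ ∉ c.support) (hw₂ : w₂ ∉ c.support) (hw : G.Adj w₁ w₂) :
    ∀ z ∈ c.adjPositions w₁ ∪ c.adjPositions w₂,
      z + 1 ∉ c.adjPositions w₁ ∪ c.adjPositions w₂ := by
  simp only [mem_union, mem_adjPositions]
  rintro z (hz | hz) (hz' | hz')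
  · exact hc.not_adj_cycleVert_add_one hw₁ hz hz'
  · exact hc.not_adj_cycleVert_add hw₁ hw₂ hw one_pos one_le_two hz (by simpa using hz')
  · exact hc.not_adj_cycleVert_add hw₂ hw₁ hw.symm one_pos one_le_two hz (by simpa using hz')
  · exact hc.not_adj_cycleVert_add_one hw₂ hz hz'

lemma IsLongestCycle.add_two_notMem_adjPositions (hc : c.IsLongestCycle) {w₁ w₂ : V}
    (hw₁ : w₁ ∉ c.support) (hw₂ : w₂ ∉ c.support) (hw : G.Adj w₁ w₂) :
    ∀ z ∈ c.adjPositions w₁, z + 2 ∉ c.adjPositions w₂ := by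
  simp only [mem_adjPositions]
  exact fun z hz hz' ↦ hc.not_adj_cycleVert_add hw₁ hw₂ hw two_pos le_rfl hz (by simpa using hz')

end adjPositions

theorem IsLongestCycle.adj_of_adj_of_not_subgraphOf_pathGraph_three [Fintype V]
    [DecidableRel G.Adj] {c : G.Walk v v} (hc : c.IsLongestCycle) {h : ℕ} (hh : 2 ≤ h)
    (hδ : ∀ v, h ≤ G.degree v) (hlen : c.length ≤ 2 * h + 1)
    (hP3 : ¬ SubgraphOf (pathGraph 3) (G.induce {x | x ∉ c.support})) {u₁ u₂ : V}
    (hu₁ : u₁ ∉ c.support) (hu₂ : u₂ ∉ c.support) (hu : G.Adj u₁ u₂) {x : V}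
    (hx : x ∈ c.support) (hx₁ : G.Adj u₁ x) : G.Adj u₂ x := by
  by_contra hx₂
  have : NeZero c.length := ⟨by have := hc.1.three_le_length; omega⟩
  obtain ⟨p, rfl⟩ := exists_cycleVert_eq hx
  have hp₁ : p ∈ c.adjPositions u₁ := by simpa using hx₁
  have hp₂ : p ∉ c.adjPositions u₂ := by simpa using hx₂
  have hdeg : h ≤ #(c.adjPositions u₂) + 1 := (hδ u₂).trans
    (c.degree_le_card_adjPositions_add_one fun y hy hyc ↦
      eq_of_adj_of_adj_of_not_subgraphOf_pathGraph_three hP3 hu₂ hyc hu₁ hy hu.symm)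
  have hcard : #(c.adjPositions u₂) + 1 ≤ #(c.adjPositions u₁ ∪ c.adjPositions u₂) := by
    rw [← card_insert_of_notMem hp₂]
    exact card_le_card (insert_subset (mem_union_left _ hp₁) subset_union_right)
  have := ZMod.two_mul_card_union_add_two_le (hc.add_one_notMem_adjPositions_union hu₁ hu₂ hu)
    (hc.add_two_notMem_adjPositions hu₁ hu₂ hu) (hc.add_two_notMem_adjPositions hu₂ hu₁ hu.symm)
    hp₁ hp₂ (card_pos.mp (by omega))
  omega

end Walk

end SimpleGraph

theorem stmt_7_general {V : Type*} [Fintype V] (G : SimpleGraph V)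
    [DecidableRel G.Adj] (h : ℕ) (hh : 2 ≤ h)
    (hδ : ∀ v, h ≤ G.degree v)
    (v : V) (c : G.Walk v v) (hc : c.IsCycle)
    (hlong : ∀ (w : V) (d : G.Walk w w), d.IsCycle → d.length ≤ c.length)
    (hlen : c.length ≤ 2 * h + 1)
    (hP3 : ¬ SubgraphOf (SimpleGraph.pathGraph 3) (G.induce {x | x ∉ c.support})) :
    ∀ u₁ u₂, u₁ ∉ c.support → u₂ ∉ c.support → G.Adj u₁ u₂ →
      {x | x ∈ c.support ∧ G.Adj u₁ x} = {x | x ∈ c.support ∧ G.Adj u₂ x} := by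
  intro u₁ u₂ hu₁ hu₂ hu
  have hc' : c.IsLongestCycle := ⟨hc, hlong⟩
  ext x
  exact ⟨fun ⟨hx, hx₁⟩ ↦ ⟨hx, hc'.adj_of_adj_of_not_subgraphOf_pathGraph_three hh hδ hlen hP3
      hu₁ hu₂ hu hx hx₁⟩,
    fun ⟨hx, hx₂⟩ ↦ ⟨hx, hc'.adj_of_adj_of_not_subgraphOf_pathGraph_three hh hδ hlen hP3
      hu₂ hu₁ hu.symm hx hx₂⟩⟩

theorem stmt_7 {V : Type*} [Fintype V] [DecidableEq V] (G : SimpleGraph V)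
    [DecidableRel G.Adj] (h : ℕ) (hh : 2 ≤ h) (hconn : G.Connected)
    (hδ : ∀ v, h ≤ G.degree v)
    (v : V) (c : G.Walk v v) (hc : c.IsCycle)
    (hlong : ∀ (w : V) (d : G.Walk w w), d.IsCycle → d.length ≤ c.length)
    (hlen : c.length ≤ 2 * h + 1)
    (hP3 : ¬ SubgraphOf (SimpleGraph.pathGraph 3) (G.induce {x | x ∉ c.support})) :
    ∀ u₁ u₂, u₁ ∉ c.support → u₂ ∉ c.support → G.Adj u₁ u₂ →
      {x | x ∈ c.support ∧ G.Adj u₁ x} = {x | x ∈ c.support ∧ G.Adj u₂ x} :=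
  stmt_7_general G h hh hδ v c hc hlong hlen hP3
end

section
/- Let H = (X,Y;E) be the complete bipartite graph with |X| = h and |Y| = h+2, and let G be obtained from H and a path P_4 by identifying a vertex u ∈ X with one endpoint of P_4. Let a₁ ≥ ... ≥ a_k ≥ 1 (k ≥ 0) and b₁ ≥ b₂ ≥ 1 be integers with Σaᵢ + b₁ + b₂ - 1 = h ≥ 2. Then G contains the disjoint union of paths P_{2a₁} ∪ ... ∪ P_{2a_k} ∪ P_{2b₁+1} ∪ P_{2b₂+1} as a subgraph. -/
/-!
Enumerate `X` as `x₀, …, x_{h-1}` with `x_{h-1} = u` and `Y` as `y₀, …, y_{h+1}`. Each path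
`P_{2aᵢ}` alternates `x_j, y_j` over its own block of indices `j < Σ aᵢ`; next, `P_{2b₁+1}`
alternates `y_j, x_j` starting and ending in `Y`; finally `P_{2b₂+1}` runs down the pendant
path into `u` and alternates downwards through the remaining indices. The counts fit because
`Σ aᵢ + b₁ + (b₂ - 1) = h` vertices of `X` and one more of `Y` are needed. Disjointness of the
paths comes from a decoding map sending each used host vertex back to its (path, position).
-/

open SimpleGraph

section Forest

variable {V ι : Type*}

theorem containsForest_of_decode (G : SimpleGraph V) (L : ι → ℕ) (g : ι → ℕ → V)
    (decode : V → ι × ℕ) (hdecode : ∀ i t, t < L i → decode (g i t) = (i, t))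
    (hadj : ∀ i t, t + 1 < L i → G.Adj (g i t) (g i (t + 1))) :
    ContainsForest G L := by
  refine ⟨fun i t => g i t, fun i s t hst => ?_, fun i j hij s t hst => ?_, hadj⟩
  · have := congrArg decode hst
    rw [hdecode i s s.2, hdecode i t t.2, Prod.mk.injEq] at this
    exact Fin.ext this.2
  · have := congrArg decode hst
    rw [hdecode i s s.2, hdecode j t t.2, Prod.mk.injEq] at this
    exact hij this.1

def alternating (e o : ℕ → V) (t : ℕ) : V :=
  if Even t then e (t / 2) else o (t / 2)

@[simp]
theorem alternating_two_mul (e o : ℕ → V) (m : ℕ) : alternating e o (2 * m) = e m := by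
  simp [alternating]

@[simp]
theorem alternating_two_mul_add_one (e o : ℕ → V) (m : ℕ) :
    alternating e o (2 * m + 1) = o m := by
  simp [alternating, Nat.add_div_of_dvd_right]

theorem adj_alternating {G : SimpleGraph V} {e o : ℕ → V} (heo : ∀ m n, G.Adj (e m) (o n))
    (t : ℕ) : G.Adj (alternating e o t) (alternating e o (t + 1)) := by
  obtain ⟨m, rfl | rfl⟩ := Nat.even_or_odd' t
  · simpa using heo m m
  · simpa [show 2 * m + 1 + 1 = 2 * (m + 1) by ring] using (heo (m + 1) m).symm

end Forest

section AttachPath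

variable {V : Type*} {H : SimpleGraph V} {u : V} {m : ℕ}

theorem attachPath_adj_inl {x y : V} (hxy : H.Adj x y) :
    (attachPath H u m).Adj (.inl x) (.inl y) :=
  (fromRel_adj _ _ _).2 ⟨by simpa using hxy.ne, .inl (.inl ⟨x, y, rfl, rfl, hxy⟩)⟩

theorem attachPath_adj_root (j : Fin m) (hj : j.val = 0) :
    (attachPath H u m).Adj (.inl u) (.inr j) :=
  (fromRel_adj _ _ _).2 ⟨by simp, .inl (.inr (.inl ⟨j, rfl, rfl, hj⟩))⟩

theorem attachPath_adj_inr (i j : Fin m) (hij : j.val = i.val + 1) :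
    (attachPath H u m).Adj (.inr i) (.inr j) :=
  (fromRel_adj _ _ _).2
    ⟨by simp [Fin.ext_iff, hij], .inl (.inr (.inr ⟨i, j, rfl, rfl, hij⟩))⟩

end AttachPath

section FinSigma

variable {k : ℕ} (a : Fin k → ℕ)

def blockOffset (i : Fin k) : ℕ :=
  ∑ j : Fin i, a (Fin.castLE i.2.le j)

theorem finSigmaFinEquiv_mk (i : Fin k) (m : Fin (a i)) :
    (finSigmaFinEquiv ⟨i, m⟩ : ℕ) = blockOffset a i + m :=
  finSigmaFinEquiv_apply _

theorem blockOffset_add_lt {i : Fin k} {m : ℕ} (hm : m < a i) :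
    blockOffset a i + m < ∑ i, a i :=
  finSigmaFinEquiv_mk a i ⟨m, hm⟩ ▸ (finSigmaFinEquiv ⟨i, ⟨m, hm⟩⟩).2

theorem finSigmaFinEquiv_symm_blockOffset_add {i : Fin k} {m : ℕ} (hm : m < a i) :
    finSigmaFinEquiv.symm ⟨blockOffset a i + m, blockOffset_add_lt a hm⟩ =
      ⟨i, ⟨m, hm⟩⟩ := by
  rw [Equiv.symm_apply_eq, Fin.ext_iff, finSigmaFinEquiv_mk]

end FinSigma

namespace PendantBipartite

variable {h k : ℕ} (u : Fin h) (a : Fin k → ℕ) (b₀ : ℕ)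

def lastIndex : Fin h := ⟨h - 1, by have := u.2; omega⟩

/-- The `n`-th vertex of `X` in an enumeration ending at `u`; indices are read modulo `h`. -/
def xVertex (n : ℕ) : (Fin h ⊕ Fin (h + 2)) ⊕ Fin 3 :=
  .inl (.inl (Equiv.swap u (lastIndex u) ⟨n % h, Nat.mod_lt _ u.pos⟩))

def yVertex (h n : ℕ) : (Fin h ⊕ Fin (h + 2)) ⊕ Fin 3 :=
  .inl (.inr ⟨n % (h + 2), Nat.mod_lt _ (by omega)⟩)

def forestMap : Fin k ⊕ Fin 2 → ℕ → (Fin h ⊕ Fin (h + 2)) ⊕ Fin 3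
  | .inl i =>
    alternating (fun m => xVertex u (blockOffset a i + m))
      (fun m => yVertex h (blockOffset a i + m))
  | .inr 0 =>
    alternating (fun m => yVertex h (∑ i, a i + m)) (fun m => xVertex u (∑ i, a i + m))
  | .inr 1 => fun t => if ht : t < 3 then .inr (Fin.rev ⟨t, ht⟩) else
    alternating (fun m => xVertex u (h - 1 - m)) (fun m => yVertex h (h - m)) (t - 3)

def decodeX (m : ℕ) : (Fin k ⊕ Fin 2) × ℕ :=
  if hm : m < ∑ i, a i then
    (.inl (finSigmaFinEquiv.symm ⟨m, hm⟩).1, 2 * (finSigmaFinEquiv.symm ⟨m, hm⟩).2)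
  else if m < ∑ i, a i + b₀ then (.inr 0, 2 * (m - ∑ i, a i) + 1)
  else (.inr 1, 2 * (h - 1 - m) + 3)

def decodeY (m : ℕ) : (Fin k ⊕ Fin 2) × ℕ :=
  if hm : m < ∑ i, a i then
    (.inl (finSigmaFinEquiv.symm ⟨m, hm⟩).1, 2 * (finSigmaFinEquiv.symm ⟨m, hm⟩).2 + 1)
  else if m ≤ ∑ i, a i + b₀ then (.inr 0, 2 * (m - ∑ i, a i))
  else (.inr 1, 2 * (h - m) + 4)

def decode : (Fin h ⊕ Fin (h + 2)) ⊕ Fin 3 → (Fin k ⊕ Fin 2) × ℕ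
  | .inl (.inl x) => decodeX (h := h) a b₀ (Equiv.swap u (lastIndex u) x)
  | .inl (.inr y) => decodeY (h := h) a b₀ y
  | .inr r => (.inr 1, 2 - r)

theorem decode_xVertex {n : ℕ} (hn : n < h) :
    decode u a b₀ (xVertex u n) = decodeX (h := h) a b₀ n := by
  simp [decode, xVertex, Nat.mod_eq_of_lt hn]

theorem decode_yVertex {n : ℕ} (hn : n < h + 2) :
    decode u a b₀ (yVertex h n) = decodeY (h := h) a b₀ n := by
  simp [decode, yVertex, Nat.mod_eq_of_lt hn]

theorem decodeX_blockOffset_add {i : Fin k} {m : ℕ} (hm : m < a i) :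
    decodeX (h := h) a b₀ (blockOffset a i + m) = (.inl i, 2 * m) := by
  rw [decodeX, dif_pos (blockOffset_add_lt a hm), finSigmaFinEquiv_symm_blockOffset_add a hm]

theorem decodeY_blockOffset_add {i : Fin k} {m : ℕ} (hm : m < a i) :
    decodeY (h := h) a b₀ (blockOffset a i + m) = (.inl i, 2 * m + 1) := by
  rw [decodeY, dif_pos (blockOffset_add_lt a hm), finSigmaFinEquiv_symm_blockOffset_add a hm]

theorem decode_forestMap_inl (hA : ∑ i, a i ≤ h) {i : Fin k} {t : ℕ} (ht : t < 2 * a i) :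
    decode u a b₀ (forestMap u a (.inl i) t) = (.inl i, t) := by
  obtain ⟨m, rfl | rfl⟩ := Nat.even_or_odd' t
  all_goals
    have hm : m < a i := by omega
    have := blockOffset_add_lt a hm
    simp only [forestMap, alternating_two_mul, alternating_two_mul_add_one]
  · rw [decode_xVertex _ _ _ (by omega), decodeX_blockOffset_add _ _ hm]
  · rw [decode_yVertex _ _ _ (by omega), decodeY_blockOffset_add _ _ hm]

theorem decode_forestMap_inr_zero (hA : ∑ i, a i + b₀ ≤ h) {t : ℕ} (ht : t < 2 * b₀ + 1) :
    decode u a b₀ (forestMap u a (.inr 0) t) = (.inr 0, t) := by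
  obtain ⟨m, rfl | rfl⟩ := Nat.even_or_odd' t
  · simp only [forestMap, alternating_two_mul]
    rw [decode_yVertex _ _ _ (by omega), decodeY, dif_neg (by omega), if_pos (by omega)]
    simp
  · simp only [forestMap, alternating_two_mul_add_one]
    rw [decode_xVertex _ _ _ (by omega), decodeX, dif_neg (by omega), if_pos (by omega)]
    simp

theorem decode_forestMap_inr_one {b₁ : ℕ} (hA : ∑ i, a i + b₀ + b₁ = h + 1) {t : ℕ}
    (ht : t < 2 * b₁ + 1) :
    decode u a b₀ (forestMap u a (.inr 1) t) = (.inr 1, t) := by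
  rcases lt_or_ge t 3 with ht3 | ht3
  · simp only [decode, forestMap, ht3, ↓reduceDIte, Fin.val_rev, Prod.mk.injEq, true_and]
    omega
  obtain ⟨m, hm | hm⟩ := Nat.even_or_odd' (t - 3)
  · simp only [forestMap, dif_neg (not_lt.2 ht3), hm, alternating_two_mul]
    rw [decode_xVertex _ _ _ (by omega), decodeX, dif_neg (by omega), if_neg (by omega)]
    simp only [Prod.mk.injEq, true_and]
    omega
  · simp only [forestMap, dif_neg (not_lt.2 ht3), hm, alternating_two_mul_add_one]
    rw [decode_yVertex _ _ _ (by omega), decodeY, dif_neg (by omega), if_neg (by omega)]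
    simp only [Prod.mk.injEq, true_and]
    omega

theorem adj_xVertex_yVertex (m n : ℕ) :
    (attachPath (completeBipartiteGraph (Fin h) (Fin (h + 2))) (.inl u) 3).Adj
      (xVertex u m) (yVertex h n) :=
  attachPath_adj_inl (by simp)

theorem xVertex_sub_one : xVertex u (h - 1) = .inl (.inl u) := by
  have : (h - 1) % h = h - 1 := Nat.mod_eq_of_lt (by have := u.2; omega)
  simp [xVertex, lastIndex, this]

theorem adj_forestMap : ∀ (i : Fin k ⊕ Fin 2) (t : ℕ),
    (attachPath (completeBipartiteGraph (Fin h) (Fin (h + 2))) (.inl u) 3).Adj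
      (forestMap u a i t) (forestMap u a i (t + 1))
  | .inl _, t => adj_alternating (fun _ _ => adj_xVertex_yVertex u _ _) t
  | .inr 0, t => adj_alternating (fun _ _ => (adj_xVertex_yVertex u _ _).symm) t
  | .inr 1, 0 => (attachPath_adj_inr 1 2 rfl).symm
  | .inr 1, 1 => (attachPath_adj_inr 0 1 rfl).symm
  | .inr 1, 2 => by
    simpa [forestMap, alternating, xVertex_sub_one] using
      (attachPath_adj_root (0 : Fin 3) rfl).symm
  | .inr 1, t + 3 => by
    simp only [forestMap, dif_neg (by omega : ¬t + 3 < 3), dif_neg (by omega : ¬t + 3 + 1 < 3),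
      Nat.add_sub_cancel, show t + 3 + 1 - 3 = t + 1 by omega]
    exact adj_alternating (fun _ _ => adj_xVertex_yVertex u _ _) t

end PendantBipartite

open PendantBipartite

theorem stmt_9_general (h k : ℕ)
    (a : Fin k → ℕ)
    (b : Fin 2 → ℕ) (hb1 : 1 ≤ b 1)
    (hsum : (∑ i, a i) + b 0 + b 1 = h + 1)
    (u : Fin h) :
    ContainsForest
      (attachPath (completeBipartiteGraph (Fin h) (Fin (h + 2))) (Sum.inl u) 3)
      (Sum.elim (fun i => 2 * a i) (fun i : Fin 2 => 2 * b i + 1)) := by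
  refine containsForest_of_decode _ _ (forestMap u a) (decode u a (b 0)) ?_
    (fun i t _ => adj_forestMap u a i t)
  rintro (i | j) t ht
  · exact decode_forestMap_inl u a (b 0) (by omega) ht
  match j with
  | 0 => exact decode_forestMap_inr_zero u a (b 0) (by omega) ht
  | 1 => exact decode_forestMap_inr_one u a (b 0) hsum ht

theorem stmt_9 (h k : ℕ) (hh : 2 ≤ h)
    (a : Fin k → ℕ) (ha : Antitone a) (ha1 : ∀ i, 1 ≤ a i)
    (b : Fin 2 → ℕ) (hb : b 1 ≤ b 0) (hb1 : 1 ≤ b 1)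
    (hsum : (∑ i, a i) + b 0 + b 1 = h + 1)
    (u : Fin h) :
    ContainsForest
      (attachPath (completeBipartiteGraph (Fin h) (Fin (h + 2))) (Sum.inl u) 3)
      (Sum.elim (fun i => 2 * a i) (fun i : Fin 2 => 2 * b i + 1)) :=
  stmt_9_general h k a b hb1 hsum u
end

section
/- Let H be a 2-connected graph on n ≥ 5 vertices such that every vertex except possibly a specified vertex u₁ has degree at least 2, and let G be obtained from H by attaching a pendant path with 2 additional vertices at u₁ (identify u₁ with an endpoint of P_3). Then G contains each of P_2 ∪ P_2 ∪ P_3, P_4 ∪ P_3, and P_2 ∪ P_5 as a subgraph. -/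
open SimpleGraph

/-! Because `H` is 2-connected, every vertex has two neighbours, and for `|s| ≤ 1` every proper
nonempty vertex set of `H - s` is left by an edge of `H - s`. Growing a path along such edges, and
rerouting through a second neighbour when the edge hits the interior of the path, gives a `P₃`
avoiding `u₁` and a `P₅` in `H`. The pendant edge together with the `P₅` (or its split into
`P₂ ∪ P₃`) gives `P₂ ∪ P₅` and `P₂ ∪ P₂ ∪ P₃`. For `P₄ ∪ P₃`: if `u₁` has a neighbour `x` off the
`P₃`, then `x u₁` followed by the pendant path is the `P₄`; otherwise no vertex off the `P₃` is
adjacent to `u₁`, so the `P₃` extends to a `P₄` in `H - u₁`, and `u₁` with the pendant path is the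
`P₃`. -/

def IsPathList {V : Type*} (G : SimpleGraph V) (l : List V) : Prop :=
  l.Nodup ∧ l.IsChain G.Adj

theorem containsForest_of_isChain {V : Type*} {G : SimpleGraph V} {k : ℕ} {L : Fin k → ℕ}
    (P : Fin k → List V) (hlen : ∀ i, (P i).length = L i)
    (hnodup : (List.ofFn P).flatten.Nodup) (hchain : ∀ i, (P i).IsChain G.Adj) :
    ContainsForest G L := by
  obtain rfl : L = fun i => (P i).length := funext fun i => (hlen i).symm
  obtain ⟨hnodup, hdisj⟩ := List.nodup_flatten.mp hnodup
  rw [List.pairwise_ofFn] at hdisj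
  refine ⟨fun i => (P i).get, fun i => ?_, fun i j hij a b hab => ?_,
    fun i a ha => (hchain i).getElem a ha⟩
  · exact List.nodup_iff_injective_get.mp (hnodup _ (List.mem_ofFn.mpr ⟨i, rfl⟩))
  · have ha : (P i).get a ∈ P i := List.get_mem _ a
    have hb : (P i).get a ∈ P j := by
      rw [show (P i).get a = (P j).get b from hab]; exact List.get_mem _ b
    rcases lt_or_gt_of_ne hij with h | h
    · exact hdisj h ha hb
    · exact hdisj h hb ha

section AttachPath

variable {V : Type*} (H : SimpleGraph V) (u : V) {m : ℕ}

@[simp]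
theorem attachPath_adj_inl_inl {x y : V} :
    (attachPath H u m).Adj (.inl x) (.inl y) ↔ H.Adj x y := by
  simp only [attachPath, exists_and_left, fromRel_adj, ne_eq, Sum.inl.injEq, exists_eq_left',
    reduceCtorEq, false_and, exists_false, and_false, and_self, or_self, or_false]
  exact ⟨fun h => h.2.elim id .symm, fun h => ⟨h.ne, .inl h⟩⟩

theorem attachPath_adj_inl_inr (h : 0 < m) :
    (attachPath H u m).Adj (.inl u) (.inr ⟨0, h⟩) := by
  simp [attachPath]

theorem attachPath_adj_inr_inr {i : ℕ} (h : i + 1 < m) :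
    (attachPath H u m).Adj (.inr ⟨i, by omega⟩) (.inr ⟨i + 1, h⟩) := by
  simp [attachPath]

theorem isChain_map_inl {l : List V} (hl : l.IsChain H.Adj) :
    (l.map Sum.inl).IsChain (attachPath H u m).Adj := by
  simpa [List.isChain_map] using hl

theorem isChain_pendant : [Sum.inl u, .inr 0, .inr 1].IsChain (attachPath H u 2).Adj := by
  simpa using ⟨attachPath_adj_inl_inr H u two_pos, attachPath_adj_inr_inr H u one_lt_two⟩

theorem containsForest_two_five {l : List V} (hl : IsPathList H l) (h5 : l.length = 5) :
    ContainsForest (attachPath H u 2) ![2, 5] := by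
  refine containsForest_of_isChain ![[.inr 0, .inr 1], l.map .inl] ?_ ?_ ?_
  · intro i; fin_cases i <;> simp [h5]
  · simp [List.ofFn_succ, hl.1.map Sum.inl_injective]
  · intro i; fin_cases i
    · exact (isChain_pendant H u).tail
    · exact isChain_map_inl H u hl.2

theorem containsForest_two_two_three {l : List V} (hl : IsPathList H l) (h5 : l.length = 5) :
    ContainsForest (attachPath H u 2) ![2, 2, 3] := by
  refine containsForest_of_isChain
    ![[.inr 0, .inr 1], (l.take 2).map .inl, (l.drop 2).map .inl] ?_ ?_ ?_
  · intro i; fin_cases i <;> simp [h5]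
  · simp [List.ofFn_succ, hl.1.map Sum.inl_injective]
  · intro i; fin_cases i
    · exact (isChain_pendant H u).tail
    · exact isChain_map_inl H u (hl.2.take 2)
    · exact isChain_map_inl H u (hl.2.drop 2)

theorem containsForest_four_three_of_notMem {l : List V} (hl : IsPathList H l) (h4 : l.length = 4)
    (hu : u ∉ l) : ContainsForest (attachPath H u 2) ![4, 3] := by
  refine containsForest_of_isChain ![l.map .inl, [.inl u, .inr 0, .inr 1]] ?_ ?_ ?_
  · intro i; fin_cases i <;> simp [h4]
  · simp [List.ofFn_succ, List.nodup_append, hl.1.map Sum.inl_injective, List.forall_mem_ne', hu]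
  · intro i; fin_cases i
    · exact isChain_map_inl H u hl.2
    · exact isChain_pendant H u

theorem containsForest_four_three_of_adj {l : List V} {x : V} (hl : IsPathList H l)
    (h3 : l.length = 3) (hx : H.Adj x u) (hxl : x ∉ l) (hu : u ∉ l) :
    ContainsForest (attachPath H u 2) ![4, 3] := by
  refine containsForest_of_isChain ![[.inl x, .inl u, .inr 0, .inr 1], l.map .inl] ?_ ?_ ?_
  · intro i; fin_cases i <;> simp [h3]
  · simp [List.ofFn_succ, hl.1.map Sum.inl_injective, hu, hxl, hx.ne]
  · intro i; fin_cases i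
    · exact List.isChain_cons_cons.mpr ⟨(attachPath_adj_inl_inl H u).mpr hx, isChain_pendant H u⟩
    · exact isChain_map_inl H u hl.2

end AttachPath

section Extension

variable {V : Type*} {G : SimpleGraph V}

theorem IsPathList.reverse {l : List V} (hl : IsPathList G l) : IsPathList G l.reverse :=
  ⟨List.nodup_reverse.mpr hl.1, List.isChain_reverse.mpr (hl.2.imp fun _ _ h => h.symm)⟩

theorem exists_isPathList_three_of_adj {a b c d : V} (hab : G.Adj a b) (hc : c ∉ [a, b])
    (hd : d ∈ [a, b]) (hcd : G.Adj c d) :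
    ∃ l, l.length = 3 ∧ IsPathList G l ∧ l ⊆ [c, a, b] := by
  simp only [List.mem_cons, List.not_mem_nil, or_false, not_or] at hc hd
  rcases hd with rfl | rfl
  · exact ⟨[c, d, b], rfl, by simp_all [IsPathList, hab.ne], by simp⟩
  · exact ⟨[a, d, c], rfl, by simp_all [IsPathList, hab.ne, hcd.symm, Ne.symm], by simp⟩

theorem exists_isPathList_four_of_adj {u a v c d t : V} (hl : IsPathList G [u, a, v])
    (hc : c ∉ [u, a, v]) (hd : d ∈ [u, a, v]) (hcd : G.Adj c d) (hta : t ≠ a) (hct : G.Adj c t) :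
    ∃ l, l.length = 4 ∧ IsPathList G l ∧ l ⊆ [t, c, u, a, v] := by
  simp only [IsPathList, List.nodup_cons, List.mem_cons, List.not_mem_nil, or_false, not_or,
    List.isChain_cons_cons, List.isChain_singleton, and_true] at hl hc hd
  obtain ⟨⟨⟨hua, huv⟩, hav, -⟩, hua', hav'⟩ := hl
  rcases hd with rfl | rfl | rfl
  · exact ⟨[c, d, a, v], rfl, by simp_all [IsPathList], by simp⟩
  · by_cases htu : t = u
    · subst htu
      exact ⟨[v, d, c, t], rfl, by simp_all [IsPathList, Ne.symm, hcd.symm, hav'.symm], by simp⟩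
    by_cases htv : t = v
    · subst htv
      exact ⟨[u, d, c, t], rfl, by simp_all [IsPathList, Ne.symm, hcd.symm], by simp⟩
    · exact ⟨[t, c, d, u], rfl, by simp_all [IsPathList, Ne.symm, hct.symm, hct.ne, hua'.symm],
        by simp⟩
  · exact ⟨[u, a, d, c], rfl, by simp_all [IsPathList, Ne.symm, hcd.symm], by simp⟩

theorem exists_isPathList_five_of_adj_second {w x y z c s : V} (hl : IsPathList G [w, x, y, z])
    (hc : c ∉ [w, x, y, z]) (hcx : G.Adj c x) (hsx : s ≠ x) (hws : G.Adj w s) :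
    ∃ l, l.length = 5 ∧ IsPathList G l := by
  simp only [IsPathList, List.nodup_cons, List.mem_cons, List.not_mem_nil, or_false, not_or,
    List.isChain_cons_cons, List.isChain_singleton, and_true] at hl hc
  obtain ⟨⟨⟨hwx, hwy, hwz⟩, ⟨hxy, hxz⟩, hyz, -⟩, hwx', hxy', hyz'⟩ := hl
  by_cases hsy : s = y
  · subst hsy
    exact ⟨[c, x, w, s, z], rfl, by simp_all [IsPathList, Ne.symm, hwx'.symm]⟩
  by_cases hsz : s = z
  · subst hsz
    exact ⟨[c, x, w, s, y], rfl, by simp_all [IsPathList, Ne.symm, hwx'.symm, hyz'.symm]⟩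
  · exact ⟨[s, w, x, y, z], rfl, by simp_all [IsPathList, Ne.symm, hws.symm, hws.ne]⟩

theorem exists_isPathList_five_of_adj {w x y z c d s t : V} (hl : IsPathList G [w, x, y, z])
    (hc : c ∉ [w, x, y, z]) (hd : d ∈ [w, x, y, z]) (hcd : G.Adj c d)
    (hsx : s ≠ x) (hws : G.Adj w s) (hty : t ≠ y) (hzt : G.Adj z t) :
    ∃ l, l.length = 5 ∧ IsPathList G l := by
  simp only [List.mem_cons, List.not_mem_nil, or_false] at hd
  rcases hd with rfl | rfl | rfl | rfl
  · exact ⟨[c, d, x, y, z], rfl, by simp_all [IsPathList]⟩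
  · exact exists_isPathList_five_of_adj_second hl hc hcd hsx hws
  · exact exists_isPathList_five_of_adj_second (by simpa using hl.reverse) (by simp_all) hcd hty hzt
  · exact ⟨[w, x, y, d, c], rfl, by simp_all [IsPathList, Ne.symm, hcd.symm]⟩

end Extension

theorem exists_notMem_of_length_lt {V : Type*} [Fintype V] (l : List V)
    (h : l.length < Fintype.card V) : ∃ b, b ∉ l := by
  classical
  obtain ⟨b, -, hb⟩ := Finset.exists_mem_notMem_of_card_lt_card
    (l.toFinset_card_le.trans_lt (h.trans_eq Finset.card_univ.symm))
  exact ⟨b, by simpa using hb⟩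

namespace TwoConnected

variable {V : Type*} [Fintype V] {H : SimpleGraph V}

theorem exists_adj_boundary (hH : TwoConnected H) {s : Finset V} (hs : s.card < 2) {l : List V}
    (hls : ∀ x ∈ l, x ∉ s) {a b : V} (ha : a ∈ l) (hb : b ∉ l) (hbs : b ∉ s) :
    ∃ c d, c ∉ l ∧ c ∉ s ∧ d ∈ l ∧ H.Adj c d := by
  obtain ⟨p⟩ := (hH.2 s hs).preconnected ⟨a, hls a ha⟩ ⟨b, hbs⟩
  obtain ⟨e, -, he₁, he₂⟩ := p.exists_boundary_dart {x | x.1 ∈ l} ha hb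
  exact ⟨e.snd, e.fst, he₂, e.snd.2, he₁, e.adj.symm⟩

theorem exists_adj_ne (hH : TwoConnected H) (v w : V) : ∃ t, t ≠ w ∧ H.Adj v t := by
  classical
  obtain ⟨b, hb⟩ := exists_notMem_of_length_lt [v, w] hH.1
  simp only [List.mem_cons, List.not_mem_nil, or_false, not_or] at hb
  -- an edge leaving `{v}` in `H - w`, or in `H` itself when `w = v`
  obtain ⟨c, d, hc, hcw, hd, hcd⟩ := hH.exists_adj_boundary (s := ({w} : Finset V).erase v)
    (l := [v]) (b := b) (Finset.card_erase_le.trans_lt (by simp)) (by simp)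
    (List.mem_singleton_self v) (by simpa using hb.1) (by simp [hb.2])
  rw [List.mem_singleton] at hc hd
  subst hd
  exact ⟨c, by simp_all, hcd.symm⟩

theorem exists_isPathList_three (hH : TwoConnected H) (hcard : 4 ≤ Fintype.card V) (u : V) :
    ∃ l, l.length = 3 ∧ IsPathList H l ∧ u ∉ l := by
  obtain ⟨p, hp⟩ := exists_notMem_of_length_lt [u] (by simp; omega)
  obtain ⟨c, hcu, hpc⟩ := hH.exists_adj_ne p u
  obtain ⟨b, hb⟩ := exists_notMem_of_length_lt [u, p, c] (by simp; omega)
  simp only [List.mem_cons, List.not_mem_nil, or_false, not_or] at hp hb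
  obtain ⟨c', d, hc', hc'u, hd, hcd⟩ := hH.exists_adj_boundary (s := {u}) (l := [p, c]) (b := b)
    (by simp) (by simp [hp, hcu]) List.mem_cons_self (by simp [hb.2.1, hb.2.2])
    (by simpa using hb.1)
  obtain ⟨l, hl3, hl, hsub⟩ := exists_isPathList_three_of_adj hpc hc' hd hcd
  refine ⟨l, hl3, hl, fun hul => ?_⟩
  have h := hsub hul
  simp only [List.mem_cons, List.not_mem_nil, or_false] at h
  rcases h with rfl | rfl | rfl <;> simp_all

theorem exists_isPathList_four (hH : TwoConnected H) {s : Finset V} (hs : s.card < 2)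
    {l : List V} (hl : IsPathList H l) (hl3 : l.length = 3) (hls : ∀ x ∈ l, x ∉ s)
    {b : V} (hb : b ∉ l) (hbs : b ∉ s) (hN : ∀ w ∈ s, ∀ x, H.Adj w x → x ∈ l) :
    ∃ l', l'.length = 4 ∧ IsPathList H l' ∧ ∀ x ∈ l', x ∉ s := by
  obtain ⟨u, a, v, rfl⟩ := List.length_eq_three.mp hl3
  obtain ⟨c, d, hc, hcs, hd, hcd⟩ := hH.exists_adj_boundary hs hls List.mem_cons_self hb hbs
  obtain ⟨t, hta, hct⟩ := hH.exists_adj_ne c a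
  obtain ⟨l', hl'4, hl', hsub⟩ := exists_isPathList_four_of_adj hl hc hd hcd hta hct
  have hts : t ∉ s := fun hts => hc (hN t hts c hct.symm)
  refine ⟨l', hl'4, hl', fun x hx => ?_⟩
  rcases List.mem_cons.mp (hsub hx) with rfl | hx
  · exact hts
  rcases List.mem_cons.mp hx with rfl | hx
  · exact hcs
  · exact hls x hx

theorem exists_isPathList_five (hH : TwoConnected H) (hcard : 5 ≤ Fintype.card V)
    {l : List V} (hl : IsPathList H l) (hl4 : l.length = 4) :
    ∃ l', l'.length = 5 ∧ IsPathList H l' := by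
  obtain ⟨w, x, y, z, rfl⟩ := List.length_eq_four.mp hl4
  obtain ⟨b, hb⟩ := exists_notMem_of_length_lt [w, x, y, z] (by simp; omega)
  obtain ⟨c, d, hc, -, hd, hcd⟩ := hH.exists_adj_boundary (s := ∅) (by simp) (by simp)
    List.mem_cons_self hb (Finset.notMem_empty b)
  obtain ⟨s, hsx, hws⟩ := hH.exists_adj_ne w x
  obtain ⟨t, hty, hzt⟩ := hH.exists_adj_ne z y
  exact exists_isPathList_five_of_adj hl hc hd hcd hsx hws hty hzt

end TwoConnected

theorem stmt_10_general {V : Type*} [Fintype V] (H : SimpleGraph V) (hH : TwoConnected H)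
    (hcard : 5 ≤ Fintype.card V) (u₁ : V) :
    ContainsForest (attachPath H u₁ 2) ![2, 2, 3] ∧
    ContainsForest (attachPath H u₁ 2) ![4, 3] ∧
    ContainsForest (attachPath H u₁ 2) ![2, 5] := by
  obtain ⟨l, hl3, hl, hul⟩ := hH.exists_isPathList_three (by omega) u₁
  obtain ⟨b, hb⟩ := exists_notMem_of_length_lt l (by omega)
  obtain ⟨p, hp4, hp, -⟩ := hH.exists_isPathList_four (s := ∅) (by simp) hl hl3 (by simp) hb
    (Finset.notMem_empty b) (by simp)
  obtain ⟨q, hq5, hq⟩ := hH.exists_isPathList_five hcard hp hp4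
  refine ⟨containsForest_two_two_three H u₁ hq hq5, ?_, containsForest_two_five H u₁ hq hq5⟩
  by_cases hN : ∃ x, H.Adj x u₁ ∧ x ∉ l
  · obtain ⟨x, hx, hxl⟩ := hN
    exact containsForest_four_three_of_adj H u₁ hl hl3 hx hxl hul
  · have hN' : ∀ x, H.Adj u₁ x → x ∈ l := fun x hx => by_contra fun hxl => hN ⟨x, hx.symm, hxl⟩
    obtain ⟨b', hb'⟩ := exists_notMem_of_length_lt (u₁ :: l) (by simp; omega)
    rw [List.mem_cons, not_or] at hb'
    obtain ⟨l', hl'4, hl', hul'⟩ := hH.exists_isPathList_four (s := {u₁}) (by simp) hl hl3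
      (fun x hx => by simpa using ne_of_mem_of_not_mem hx hul) hb'.2 (by simpa using hb'.1)
      (by simpa using hN')
    exact containsForest_four_three_of_notMem H u₁ hl' hl'4
      (fun hu => by simpa using hul' u₁ hu)

theorem stmt_10 {V : Type*} [Fintype V] [DecidableEq V] (H : SimpleGraph V)
    [DecidableRel H.Adj] (hH : TwoConnected H) (hcard : 5 ≤ Fintype.card V)
    (u₁ : V) (hd : ∀ v, v ≠ u₁ → 2 ≤ H.degree v) :
    ContainsForest (attachPath H u₁ 2) ![2, 2, 3] ∧
    ContainsForest (attachPath H u₁ 2) ![4, 3] ∧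
    ContainsForest (attachPath H u₁ 2) ![2, 5] :=
  stmt_10_general H hH hcard u₁
end
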